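/- The forcing notion Q¹_S is (<λ)-complete: every ≤-increasing sequence of conditions of length a limit ordinal γ < λ has an upper bound in Q¹_S. -/

import Mathlib

open Set

noncomputable section

universe u

/-- `c` is an `(α,β)`-extending function: it maps subsets of `α` (coded as subsets of
`Set.Iio α`) to subsets of `β` that are not subsets of `α`, with `c u ∩ α = u`. -/
def ExtFun (α β : Ordinal.{u}) (c : Set Ordinal.{u} → Set Ordinal.{u}) : Prop :=
  ∀ u, u ⊆ Set.Iio α → c u ⊆ Set.Iio β ∧ ¬ c u ⊆ Set.Iio α ∧ c u ∩ Set.Iio α = u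

/-- The next element of `C` above `α`. -/
def nextC (C : Set Ordinal.{u}) (α : Ordinal.{u}) : Ordinal.{u} := sInf (C ∩ Set.Ioi α)

/-- The least element of `C` above all elements of `w`. -/
def firstAbove (C : Set Ordinal.{u}) (w : Set Ordinal.{u}) : Ordinal.{u} :=
  sInf {α ∈ C | w ⊆ Set.Iio α}

/-- The least element of `C` which is `≥ sup w`. -/
def minAboveSup (C : Set Ordinal.{u}) (w : Set Ordinal.{u}) : Ordinal.{u} :=
  sInf (C \ Set.Iio (sSup w))

/-- `C` is an unbounded subset of (the ordinals below) `lam`. -/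
def UnbIn (lam : Ordinal.{u}) (C : Set Ordinal.{u}) : Prop :=
  C ⊆ Set.Iio lam ∧ ∀ α < lam, ∃ β ∈ C, α < β

/-- `C` is a club (closed and unbounded) subset of `lam`. -/
def IsClubIn (lam : Ordinal.{u}) (C : Set Ordinal.{u}) : Prop :=
  UnbIn lam C ∧
    ∀ ξ < lam, (C ∩ Set.Iio ξ).Nonempty → ξ = sSup (C ∩ Set.Iio ξ) → ξ ∈ C

/-- `S` is a stationary subset of `lam`. -/
def StatIn (lam : Ordinal.{u}) (S : Set Ordinal.{u}) : Prop :=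
  S ⊆ Set.Iio lam ∧ ∀ C, IsClubIn lam C → (S ∩ C).Nonempty

/-- `𝔠 = ⟨c α : α ∈ C⟩` is a `C`-extending sequence. -/
def CextSeq (lam : Ordinal.{u}) (C : Set Ordinal.{u})
    (c : Ordinal.{u} → Set Ordinal.{u} → Set Ordinal.{u}) : Prop :=
  UnbIn lam C ∧ ∀ α ∈ C, ExtFun α (nextC C α) (c α)

/-- `pos⁺(w, 𝔠, β)`. -/
def posPlus (C : Set Ordinal.{u}) (c : Ordinal.{u} → Set Ordinal.{u} → Set Ordinal.{u})
    (w : Set Ordinal.{u}) (β : Ordinal.{u}) : Set (Set Ordinal.{u}) :=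
  {u | u ⊆ Set.Iio β ∧
    u ∩ Set.Iio (firstAbove C w) = w ∧
    (∀ α₀ ∈ C, w ⊆ Set.Iio α₀ → (C ∩ Set.Ioi α₀).Nonempty → nextC C α₀ ≤ β →
      (c α₀ (u ∩ Set.Iio α₀) = u ∩ Set.Iio (nextC C α₀) ∨
        u ∩ Set.Iio α₀ = u ∩ Set.Iio (nextC C α₀))) ∧
    (∀ α₀, sSup w < α₀ → α₀ ∉ C → (C ∩ Set.Iio α₀).Nonempty →
      α₀ = sSup (C ∩ Set.Iio α₀) → (C ∩ Set.Ioi α₀).Nonempty → nextC C α₀ ≤ β →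
      u ∩ Set.Iio (nextC C α₀) = u ∩ Set.Iio α₀)}

/-- `pos(w, 𝔠, β)`. -/
def pos (C : Set Ordinal.{u}) (c : Ordinal.{u} → Set Ordinal.{u} → Set Ordinal.{u})
    (w : Set Ordinal.{u}) (β : Ordinal.{u}) : Set (Set Ordinal.{u}) :=
  {u ∈ posPlus C c w β |
    firstAbove C w ≤ β → nextC C (firstAbove C w) ≤ β →
      u ∩ Set.Iio (nextC C (firstAbove C w)) = c (firstAbove C w) w}

/-- `w` is an `S`-closed set: limits of `w` lying in `S` belong to `w`. -/
def SClosed (S w : Set Ordinal.{u}) : Prop :=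
  ∀ ξ, (w ∩ Set.Iio ξ).Nonempty → ξ = sSup (w ∩ Set.Iio ξ) → ξ ∈ S → ξ ∈ w

/-- `𝔠` is an `S`-closed `C`-extending sequence. -/
def SClosedSeq (lam : Ordinal.{u}) (S C : Set Ordinal.{u})
    (c : Ordinal.{u} → Set Ordinal.{u} → Set Ordinal.{u}) : Prop :=
  IsClubIn lam C ∧ CextSeq lam C c ∧
  (∀ α ∈ C, ∀ u, u ⊆ Set.Iio α → α ∈ c α u) ∧
  (∀ ξ ∈ S, ξ ∉ C → ∀ α ∈ C ∩ Set.Iio ξ, ∀ u, u ⊆ Set.Iio α →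
    ξ = sSup (c α u ∩ Set.Iio ξ) → ξ ∈ c α u)

/-- `pos⁺_S(w, 𝔠, β)`. -/
def posPlusS (S C : Set Ordinal.{u}) (c : Ordinal.{u} → Set Ordinal.{u} → Set Ordinal.{u})
    (w : Set Ordinal.{u}) (β : Ordinal.{u}) : Set (Set Ordinal.{u}) :=
  {u ∈ posPlus C c w β | SClosed S (u ∪ {β})}

/-- `pos_S(w, 𝔠, β)`. -/
def posS (S C : Set Ordinal.{u}) (c : Ordinal.{u} → Set Ordinal.{u} → Set Ordinal.{u})
    (w : Set Ordinal.{u}) (β : Ordinal.{u}) : Set (Set Ordinal.{u}) :=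
  {u ∈ pos C c w β | SClosed S (u ∪ {β})}

/-- A condition in the forcing notion `Q¹_S`: a triple `(w, C, 𝔠)` where `C` is a club of
`lam`, `w ⊆ min C` with `w ∪ {min C}` `S`-closed, and `𝔠` is an `S`-closed `C`-extending
sequence (normalized to be `∅` outside its natural domain). -/
structure Q1S (lam : Ordinal.{u}) (S : Set Ordinal.{u}) where
  w : Set Ordinal.{u}
  C : Set Ordinal.{u}
  c : Ordinal.{u} → Set Ordinal.{u} → Set Ordinal.{u}
  seq : SClosedSeq lam S C c
  w_sub : w ⊆ Set.Iio (sInf C)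
  w_cl : SClosed S (w ∪ {sInf C})
  norm : ∀ α u, (α ∉ C ∨ ¬ u ⊆ Set.Iio α) → c α u = ∅

/-- The order of `Q¹_S`. -/
def Q1Sle (lam : Ordinal.{u}) (S : Set Ordinal.{u}) (p q : Q1S lam S) : Prop :=
  q.C ⊆ p.C ∧ q.w ∈ posPlusS S p.C p.c p.w (sInf q.C) ∧
  ∀ α₀ ∈ q.C, (q.C ∩ Set.Ioi α₀).Nonempty →
    ∀ u ∈ posPlusS S q.C q.c q.w α₀,
      q.c α₀ u ∈ posS S p.C p.c u (nextC q.C α₀)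

open scoped Classical in
/-- Restriction of an extending sequence to a smaller domain `C` (normalized). -/
def restC (C : Set Ordinal.{u}) (c : Ordinal.{u} → Set Ordinal.{u} → Set Ordinal.{u}) :
    Ordinal.{u} → Set Ordinal.{u} → Set Ordinal.{u} :=
  fun α u => if α ∈ C ∧ u ⊆ Set.Iio α then c α u else ∅

/-- `q` is the condition `p↾_α u = (u, C^p \ α, 𝔠^p ↾ (C^p \ α))`. -/
def IsRestrictedCond (lam : Ordinal.{u}) (S : Set Ordinal.{u}) (p : Q1S lam S)
    (α : Ordinal.{u}) (u : Set Ordinal.{u}) (q : Q1S lam S) : Prop :=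
  q.w = u ∧ q.C = p.C ∩ Set.Ici α ∧ q.c = restC (p.C ∩ Set.Ici α) p.c

/-- The order type of a set of ordinals. -/
def otp (s : Set Ordinal.{u}) : Ordinal.{u + 1} := Ordinal.type (Subrel ((· < ·) : Ordinal.{u} → Ordinal.{u} → Prop) (· ∈ s))

open scoped Classical in
/-- The extending sequence of the natural limit of an increasing sequence
`⟨p ξ : ξ < γ⟩` of conditions in `Q¹_S`. -/
def natLimitC (lam : Ordinal.{u}) (S : Set Ordinal.{u}) (γ : Ordinal.{u})
    (p : Ordinal.{u} → Q1S lam S) : Ordinal.{u} → Set Ordinal.{u} → Set Ordinal.{u} :=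
  fun δ u =>
    if δ ∈ ⋂ ξ ∈ Set.Iio γ, (p ξ).C then
      if u ⊆ Set.Iio δ then
        if ∀ ξ < γ, u ∈ posPlusS S (p ξ).C (p ξ).c (p ξ).w δ then
          ⋃ ξ ∈ Set.Iio γ, (p ξ).c δ u
        else u ∪ {δ}
      else ∅
    else ∅

/-- `G` is a filter on the forcing notion `Q¹_S`. -/
def QFilter (lam : Ordinal.{u}) (S : Set Ordinal.{u}) (G : Set (Q1S lam S)) : Prop :=
  G.Nonempty ∧ (∀ p ∈ G, ∀ q, Q1Sle lam S q p → q ∈ G) ∧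
    ∀ p ∈ G, ∀ q ∈ G, ∃ r ∈ G, Q1Sle lam S p r ∧ Q1Sle lam S q r

/-- `G` is a generic filter on `Q¹_S`: a filter meeting every dense set. -/
def QGeneric (lam : Ordinal.{u}) (S : Set Ordinal.{u}) (G : Set (Q1S lam S)) : Prop :=
  QFilter lam S G ∧ ∀ D : Set (Q1S lam S),
    (∀ p, ∃ q ∈ D, Q1Sle lam S p q) → (D ∩ G).Nonempty

section Game
variable {Q : Type*}

/-- `f` codes a legal partial play of `⅁₀^λ(Q, r)` of length `i` in which Complete
follows the strategy `σ`. -/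
def IsPartialPlay (le : Q → Q → Prop) (r : Q)
    (σ : (Ordinal.{u} → Q × Q) → Ordinal.{u} → Q → Q) (i : Ordinal.{u})
    (f : Ordinal.{u} → Q × Q) : Prop :=
  ∀ j < i, le r (f j).1 ∧ (∀ k < j, le (f k).2 (f j).1) ∧
    le (f j).1 (f j).2 ∧ (f j).2 = σ f j (f j).1

/-- `σ` is a winning strategy for Complete in `⅁₀^λ(Q, r)`: it depends only on the
history, Incomplete always has a legal move, and `σ` answers any legal move legally. -/
def WinningStrat (le : Q → Q → Prop) (lam : Ordinal.{u}) (r : Q)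
    (σ : (Ordinal.{u} → Q × Q) → Ordinal.{u} → Q → Q) : Prop :=
  (∀ f g i p, (∀ j < i, f j = g j) → σ f i p = σ g i p) ∧
  ∀ i < lam, ∀ f, IsPartialPlay le r σ i f →
    (∃ p, le r p ∧ ∀ j < i, le (f j).2 p) ∧
    (∀ p, le r p → (∀ j < i, le (f j).2 p) → le p (σ f i p))

/-- `Q` is strategically `(<λ)`-complete. -/
def StratComplete (Q : Type*) (le : Q → Q → Prop) (lam : Ordinal.{u}) : Prop :=
  ∀ r : Q, ∃ σ, WinningStrat le lam r σ

end Game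

/-- A family `Fam ⊆ β^β` is `F`-dominating. -/
def Dominating {β : Type*} [LT β] (F : Set (Set β)) (Fam : Set (β → β)) : Prop :=
  ∀ g : β → β, ∃ f ∈ Fam, {a | g a < f a} ∈ F

/-- The `F`-dominating number `𝔡_F`. -/
def domNum {β : Type*} [LT β] (F : Set (Set β)) : Cardinal :=
  sInf {c | ∃ Fam : Set (β → β), Dominating F Fam ∧ c = Cardinal.mk Fam}

/-- `U` is a (proper) filter on (the ordinals below) `lam`. -/
def FilterOn (lam : Ordinal.{u}) (U : Set (Set Ordinal.{u})) : Prop :=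
  (∀ A ∈ U, A ⊆ Set.Iio lam) ∧ Set.Iio lam ∈ U ∧ ∅ ∉ U ∧
  (∀ A ∈ U, ∀ B ∈ U, A ∩ B ∈ U) ∧
  (∀ A ∈ U, ∀ B, A ⊆ B → B ⊆ Set.Iio lam → B ∈ U)

/-- The diagonal intersection of a `lam`-sequence of sets. -/
def diagInter (lam : Ordinal.{u}) (A : Ordinal.{u} → Set Ordinal.{u}) : Set Ordinal.{u} :=
  {δ | δ < lam ∧ ∀ i < δ, δ ∈ A i}

/-- `U` is a normal filter on `lam`. -/
def NormalFilterOn (lam : Ordinal.{u}) (U : Set (Set Ordinal.{u})) : Prop :=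
  FilterOn lam U ∧
    ∀ A : Ordinal.{u} → Set Ordinal.{u}, (∀ i < lam, A i ∈ U) → diagInter lam A ∈ U

/-- A condition in the forcing notion `Q²_𝒰`. -/
structure Q2U (lam : Ordinal.{u}) (U : Set (Set Ordinal.{u})) where
  w : Set Ordinal.{u}
  C : Set Ordinal.{u}
  c : Ordinal.{u} → Set Ordinal.{u} → Set Ordinal.{u}
  C_mem : C ∈ U
  seq : CextSeq lam C c
  w_sub : w ⊆ Set.Iio (sInf C)
  norm : ∀ α u, (α ∉ C ∨ ¬ u ⊆ Set.Iio α) → c α u = ∅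

/-- The order of `Q²_𝒰`. -/
def Q2Ule (lam : Ordinal.{u}) (U : Set (Set Ordinal.{u})) (p q : Q2U lam U) : Prop :=
  q.C ⊆ p.C ∧ q.w ∈ posPlus p.C p.c p.w (sInf q.C) ∧
  ∀ α₀ ∈ q.C, (q.C ∩ Set.Ioi α₀).Nonempty →
    ∀ u ∈ posPlus q.C q.c q.w α₀,
      q.c α₀ u ∈ pos p.C p.c u (nextC q.C α₀)

/-- `q` is the condition `p↾_α u` in `Q²_𝒰`. -/
def IsRestrictedCond2 (lam : Ordinal.{u}) (U : Set (Set Ordinal.{u})) (p : Q2U lam U)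
    (α : Ordinal.{u}) (u : Set Ordinal.{u}) (q : Q2U lam U) : Prop :=
  q.w = u ∧ q.C = p.C ∩ Set.Ici α ∧ q.c = restC (p.C ∩ Set.Ici α) p.c

end

/-!
The upper bound is the natural limit `q = (⋃ w^{p_ξ}, ⋂ C^{p_ξ}, 𝔠^q)`. As `γ < λ = cf λ`, the
intersection of the clubs is a club, and the successor of `δ` in `C^q` is the supremum of its
successors in the `C^{p_ζ}`; so every bounded piece of `q` is already decided by a single `p_ζ`.
The heart of the proof is that `pos⁺_S(w^q, 𝔠^q, α)` is contained in every
`pos⁺_S(w^{p_η}, 𝔠^{p_η}, α)`, by induction on `α ∈ C^q`: an interval `[x, nextC^{p_η} x)`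
lies either below `min C^q`, where `u` agrees with `w^{p_ζ}` for a large `ζ`, or inside some
`[δ, nextC^q δ)`, where `u` is either constant or, by the induction hypothesis at `δ`, follows
`c^{p_ζ}_δ(u ∩ δ)` for a large `ζ`. Then `c^q_δ(u)` is the coherent union of the
`c^{p_ζ}_δ(u)`, and each condition of `p_η ≤ q` is inherited from `p_η ≤ p_ζ` for a large `ζ`.
-/

open Set

lemma inter_Iio_inter_Iio_of_le {u : Set Ordinal} {a b : Ordinal} (hab : a ≤ b) :
    u ∩ Iio b ∩ Iio a = u ∩ Iio a := by
  rw [inter_assoc, Iio_inter_Iio, min_eq_right hab]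

lemma inter_Iio_eq_of_le {u v : Set Ordinal} {a b : Ordinal} (h : u ∩ Iio b = v ∩ Iio b)
    (hab : a ≤ b) : u ∩ Iio a = v ∩ Iio a := by
  rw [← inter_Iio_inter_Iio_of_le (u := u) hab, h, inter_Iio_inter_Iio_of_le hab]

lemma inter_Iio_eq_of_le_of_le {u : Set Ordinal} {a b t : Ordinal}
    (h : u ∩ Iio a = u ∩ Iio b) (hat : a ≤ t) (htb : t ≤ b) : u ∩ Iio t = u ∩ Iio a := by
  refine subset_antisymm (fun x hx => ?_) (inter_subset_inter_right _ (Iio_subset_Iio hat))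
  have hxb : x ∈ u ∩ Iio b := ⟨hx.1, lt_of_lt_of_le hx.2 htb⟩
  rwa [← h] at hxb

lemma union_singleton_inter_Iio {u : Set Ordinal} {a ξ : Ordinal} (h : ξ ≤ a) :
    (u ∪ {a}) ∩ Iio ξ = u ∩ Iio ξ := by
  rw [union_inter_distrib_right, singleton_inter_eq_empty.mpr (fun h' => h'.not_ge h), union_empty]

lemma sSup_inter_Iio_le {w : Set Ordinal} {a : Ordinal} (hw : w ⊆ Iic a) (ξ : Ordinal) :
    sSup (w ∩ Iio ξ) ≤ a :=
  csSup_le' fun _ hx => hw hx.1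

lemma SClosed.mem_of_inter_Iio_eq {S w v : Set Ordinal} {b t ξ : Ordinal}
    (hv : SClosed S (v ∪ {b})) (h : w ∩ Iio t = v ∩ Iio t) (hξt : ξ < t) (hξb : ξ < b)
    (hne : (w ∩ Iio ξ).Nonempty) (hsup : ξ = sSup (w ∩ Iio ξ)) (hξS : ξ ∈ S) : ξ ∈ w := by
  have hw : w ∩ Iio ξ = (v ∪ {b}) ∩ Iio ξ := by
    rw [union_singleton_inter_Iio hξb.le, ← inter_Iio_inter_Iio_of_le (u := w) hξt.le, h,
      inter_Iio_inter_Iio_of_le hξt.le]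
  rw [hw] at hne hsup
  have hξw : ξ ∈ w ∩ Iio t := by
    rw [h]
    exact ⟨(hv ξ hne hsup hξS).resolve_right hξb.ne, hξt⟩
  exact hξw.1

lemma SClosed.union_singleton {S w : Set Ordinal} {b : Ordinal} (hw : w ⊆ Iio b)
    (h : ∀ ξ < b, (w ∩ Iio ξ).Nonempty → ξ = sSup (w ∩ Iio ξ) → ξ ∈ S → ξ ∈ w) :
    SClosed S (w ∪ {b}) := by
  intro ξ hne hsup hξS
  rcases lt_trichotomy ξ b with hξb | rfl | hbξ
  · rw [union_singleton_inter_Iio hξb.le] at hne hsup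
    exact Or.inl (h ξ hξb hne hsup hξS)
  · exact Or.inr rfl
  · refine absurd (sSup_inter_Iio_le (a := b) ?_ ξ) (hsup ▸ hbξ.not_ge)
    rintro x (hx | rfl)
    exacts [(mem_Iio.mp (hw hx)).le, self_mem_Iic]

section Clubs

variable {lam : Ordinal} {C : Set Ordinal}

lemma UnbIn.nonempty (hC : UnbIn lam C) (hlam : 0 < lam) : C.Nonempty :=
  let ⟨β, hβ, _⟩ := hC.2 0 hlam; ⟨β, hβ⟩

lemma UnbIn.sInf_mem (hC : UnbIn lam C) (hlam : 0 < lam) : sInf C ∈ C :=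
  csInf_mem (hC.nonempty hlam)

lemma UnbIn.nextC_mem (hC : UnbIn lam C) {x : Ordinal} (hx : x < lam) :
    nextC C x ∈ C ∩ Ioi x :=
  csInf_mem (let ⟨β, hβ, hxβ⟩ := hC.2 x hx; ⟨β, hβ, hxβ⟩)

lemma UnbIn.lt_nextC (hC : UnbIn lam C) {x : Ordinal} (hx : x < lam) : x < nextC C x :=
  (hC.nextC_mem hx).2

lemma UnbIn.nextC_lt (hC : UnbIn lam C) {x : Ordinal} (hx : x < lam) : nextC C x < lam :=
  hC.1 (hC.nextC_mem hx).1

lemma nextC_le {x y : Ordinal} (hy : y ∈ C) (hxy : x < y) : nextC C x ≤ y :=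
  csInf_le' ⟨hy, hxy⟩

lemma nextC_le_nextC_of_subset {C' : Set Ordinal} {x : Ordinal} (hsub : C' ⊆ C)
    (hne : (C' ∩ Ioi x).Nonempty) : nextC C x ≤ nextC C' x :=
  csInf_le_csInf (OrderBot.bddBelow _) hne (inter_subset_inter_left _ hsub)

lemma firstAbove_eq_sInf {w : Set Ordinal} (hC : C.Nonempty) (hw : w ⊆ Iio (sInf C)) :
    firstAbove C w = sInf C :=
  le_antisymm (csInf_le' ⟨csInf_mem hC, hw⟩)
    (le_csInf ⟨_, csInf_mem hC, hw⟩ fun _ hb => csInf_le' hb.1)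

lemma IsClubIn.sSup_mem (hC : IsClubIn lam C) {s : Set Ordinal} (hsC : s ⊆ C) (hs : s.Nonempty)
    (hbdd : BddAbove s) (hlt : sSup s < lam) : sSup s ∈ C := by
  by_cases hmem : sSup s ∈ s
  · exact hsC hmem
  have hs_lt : s ⊆ Iio (sSup s) := fun x hx => (le_csSup hbdd hx).lt_of_ne fun h => hmem (h ▸ hx)
  have hne : (C ∩ Iio (sSup s)).Nonempty := let ⟨x, hx⟩ := hs; ⟨x, hsC hx, hs_lt hx⟩
  refine hC.2 _ hlt hne (le_antisymm (csSup_le_csSup ⟨sSup s, fun _ hx => hx.2.le⟩ hs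
    (subset_inter hsC hs_lt)) (csSup_le hne fun _ hx => hx.2.le))

lemma IsClubIn.exists_le_lt_nextC (hC : IsClubIn lam C) (hlam : 0 < lam) {x : Ordinal}
    (hx : x < lam) (hge : sInf C ≤ x) : ∃ δ ∈ C, δ ≤ x ∧ x < nextC C δ := by
  set s := C ∩ Iic x
  have hbdd : BddAbove s := ⟨x, fun _ hy => hy.2⟩
  have hne : s.Nonempty := ⟨sInf C, hC.1.sInf_mem hlam, hge⟩
  have hδx : sSup s ≤ x := csSup_le hne fun _ hy => hy.2
  have hδC : sSup s ∈ C := hC.sSup_mem inter_subset_left hne hbdd (hδx.trans_lt hx)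
  refine ⟨sSup s, hδC, hδx, lt_of_not_ge fun hle => ?_⟩
  have hnext := hC.1.nextC_mem (hδx.trans_lt hx)
  exact hnext.2.not_ge (le_csSup hbdd ⟨hnext.1, hle⟩)

end Clubs

lemma IsClubIn.biInter {lam γ : Ordinal.{u}} (hlam : Cardinal.aleph0 < lam.cof)
    (hγ : γ.card < lam.cof) (hγ0 : 0 < γ) {C : Ordinal → Set Ordinal}
    (hC : ∀ ξ < γ, IsClubIn lam (C ξ)) : IsClubIn lam (⋂ ξ ∈ Iio γ, C ξ) := by
  have hsub : ∀ η < γ, ⋂ ξ ∈ Iio γ, C ξ ⊆ C η := fun η hη => biInter_subset_of_mem hη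
  refine ⟨⟨(hsub 0 hγ0).trans (hC 0 hγ0).1.1, fun α hα => ?_⟩, fun ξ hξ hne hsup => ?_⟩
  · -- the supremum of all finite compositions of the maps `nextC (C ξ)` applied to `α`
    let f : γ.ToType → Ordinal → Ordinal := fun i x => nextC (C i) x
    have hf : ∀ i, ∀ x < lam, f i x < lam := fun i x hx => (hC i i.toOrd.2).1.nextC_lt hx
    have hβ : Ordinal.nfpFamily f α < lam := Ordinal.nfpFamily_lt_ord_lift hlam
      (by rwa [Cardinal.mk_toType, Cardinal.lift_id]) hf hα
    have hfold : ∀ l, List.foldr f α l < lam := fun l =>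
      (Ordinal.foldr_le_nfpFamily f α l).trans_lt hβ
    have hmem : ∀ η (hη : η < γ), Ordinal.nfpFamily f α ∈ C η := by
      intro η hη
      let i : γ.ToType := Ordinal.ToType.mk ⟨η, hη⟩
      have hCi : C i = C η := by simp [i]
      have hsC : range (fun l => f i (List.foldr f α l)) ⊆ C η := by
        rintro _ ⟨l, rfl⟩
        exact hCi ▸ ((hC i i.toOrd.2).1.nextC_mem (hfold l)).1
      have hbdd : BddAbove (range fun l => f i (List.foldr f α l)) :=
        ⟨lam, by rintro _ ⟨l, rfl⟩; exact (hf i _ (hfold l)).le⟩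
      have hsup : sSup (range fun l => f i (List.foldr f α l)) = Ordinal.nfpFamily f α := by
        refine le_antisymm (csSup_le (range_nonempty _) ?_) (Ordinal.nfpFamily_le fun l => ?_)
        · rintro _ ⟨l, rfl⟩
          exact Ordinal.foldr_le_nfpFamily f α (i :: l)
        · exact ((hC i i.toOrd.2).1.lt_nextC (hfold l)).le.trans (le_csSup hbdd ⟨l, rfl⟩)
      exact hsup ▸ (hC η hη).sSup_mem hsC (range_nonempty _) hbdd (hsup ▸ hβ)
    let i₀ : γ.ToType := Ordinal.ToType.mk ⟨0, hγ0⟩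
    exact ⟨_, mem_iInter₂.mpr hmem, ((hC i₀ i₀.toOrd.2).1.lt_nextC hα).trans_le
      (Ordinal.foldr_le_nfpFamily f α [i₀])⟩
  · exact mem_iInter₂.mpr fun η hη => hsup ▸ (hC η hη).sSup_mem
      (inter_subset_left.trans (hsub η hη)) hne ⟨ξ, fun _ h => h.2.le⟩ (hsup ▸ hξ)

section PosPlus

variable {C : Set Ordinal} {c : Ordinal → Set Ordinal → Set Ordinal} {w u v : Set Ordinal}
  {x : Ordinal}

lemma nextC_mem_of_nonempty (hne : (C ∩ Ioi x).Nonempty) : nextC C x ∈ C ∩ Ioi x :=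
  csInf_mem hne

/-- Clauses (iii) and (iv) of `pos⁺(w, 𝔠, β)` on the interval `[x, nextC C x)`. -/
def PosPlusAt (C : Set Ordinal) (c : Ordinal → Set Ordinal → Set Ordinal) (w u : Set Ordinal)
    (x : Ordinal) : Prop :=
  (x ∈ C → w ⊆ Iio x →
      c x (u ∩ Iio x) = u ∩ Iio (nextC C x) ∨ u ∩ Iio x = u ∩ Iio (nextC C x)) ∧
    (sSup w < x → x ∉ C → (C ∩ Iio x).Nonempty → x = sSup (C ∩ Iio x) →
      u ∩ Iio (nextC C x) = u ∩ Iio x)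

lemma mem_posPlus_iff {β : Ordinal} :
    u ∈ posPlus C c w β ↔ u ⊆ Iio β ∧ u ∩ Iio (firstAbove C w) = w ∧
      ∀ x, (C ∩ Ioi x).Nonempty → nextC C x ≤ β → PosPlusAt C c w u x := by
  refine and_congr_right fun _ => and_congr_right fun _ => ⟨fun h x hne hle => ?_, fun h => ?_⟩
  · exact ⟨fun hxC hw => h.1 x hxC hw hne hle, fun hw hxC h₁ h₂ => h.2 x hw hxC h₁ h₂ hne hle⟩
  · exact ⟨fun x hxC hw hne hle => (h x hne hle).1 hxC hw,
      fun x hw hxC h₁ h₂ hne hle => (h x hne hle).2 hw hxC h₁ h₂⟩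

lemma PosPlusAt.of_inter_Iio_eq {t : Ordinal} (hv : PosPlusAt C c w v x) (hx : x ≤ nextC C x)
    (ht : nextC C x ≤ t) (h : u ∩ Iio t = v ∩ Iio t) : PosPlusAt C c w u x := by
  have hnext := inter_Iio_eq_of_le h ht
  have hx' := inter_Iio_eq_of_le h (hx.trans ht)
  simpa only [PosPlusAt, hnext, hx'] using hv

lemma PosPlusAt.mono_w {w' : Set Ordinal} (h : PosPlusAt C c w' u x)
    (h₁ : w ⊆ Iio x → w' ⊆ Iio x) (h₂ : sSup w < x → x ∉ C → sSup w' < x) :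
    PosPlusAt C c w u x :=
  ⟨fun hxC hw => h.1 hxC (h₁ hw), fun hw hxC => h.2 (h₂ hw hxC) hxC⟩

lemma posPlusAt_of_inter_Iio_eq (h : u ∩ Iio (nextC C x) = u ∩ Iio x) : PosPlusAt C c w u x :=
  ⟨fun _ _ => Or.inr h.symm, fun _ _ _ _ => h⟩

lemma inter_Iio_mem_posPlusS {S : Set Ordinal} {β δ : Ordinal} (hu : u ∈ posPlusS S C c w β)
    (hδβ : δ ≤ β) (hδ : firstAbove C w ≤ δ) : u ∩ Iio δ ∈ posPlusS S C c w δ := by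
  obtain ⟨hβ, hfirst, hat⟩ := mem_posPlus_iff.mp hu.1
  refine ⟨mem_posPlus_iff.mpr ⟨inter_subset_right, ?_, fun x hne hx => ?_⟩, ?_⟩
  · rwa [inter_Iio_inter_Iio_of_le hδ]
  · exact (hat x hne (hx.trans hδβ)).of_inter_Iio_eq (nextC_mem_of_nonempty hne).2.le hx
      (inter_Iio_inter_Iio_of_le le_rfl)
  · refine SClosed.union_singleton inter_subset_right fun ξ hξ hne hsup hξS => ?_
    exact hu.2.mem_of_inter_Iio_eq (inter_Iio_inter_Iio_of_le le_rfl) hξ (hξ.trans_le hδβ)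
      hne hsup hξS

lemma mem_posPlusS_sInf {S : Set Ordinal} (hC : C.Nonempty) (hw : w ⊆ Iio (sInf C))
    (hcl : SClosed S (w ∪ {sInf C})) : w ∈ posPlusS S C c w (sInf C) := by
  refine ⟨mem_posPlus_iff.mpr ⟨hw, ?_, fun x hne hle => ?_⟩, hcl⟩
  · rw [firstAbove_eq_sInf hC hw, inter_eq_left.mpr hw]
  have hx : x < sInf C := (nextC_mem_of_nonempty hne).2.trans_le hle
  exact ⟨fun hxC => absurd (csInf_le' hxC) hx.not_ge,
    fun _ _ ⟨y, hy, hyx⟩ => absurd (csInf_le' hy) (hyx.trans hx).not_ge⟩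

end PosPlus

namespace Q1S

variable {lam : Ordinal} {S : Set Ordinal} {γ : Ordinal} {p : Ordinal → Q1S lam S}

def IncreasingBelow (γ : Ordinal) (p : Ordinal → Q1S lam S) : Prop :=
  ∀ ξ ζ, ξ < ζ → ζ < γ → Q1Sle lam S (p ξ) (p ζ)

def limC (γ : Ordinal) (p : Ordinal → Q1S lam S) : Set Ordinal := ⋂ ξ ∈ Iio γ, (p ξ).C

def limW (γ : Ordinal) (p : Ordinal → Q1S lam S) : Set Ordinal := ⋃ ξ ∈ Iio γ, (p ξ).w

lemma mem_limC {x : Ordinal} : x ∈ limC γ p ↔ ∀ ξ < γ, x ∈ (p ξ).C := mem_iInter₂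

lemma mem_limW {x : Ordinal} : x ∈ limW γ p ↔ ∃ ξ < γ, x ∈ (p ξ).w := by simp [limW]

lemma limC_subset {ζ : Ordinal} (hζ : ζ < γ) : limC γ p ⊆ (p ζ).C :=
  biInter_subset_of_mem hζ

lemma isClubIn_limC {κ : Cardinal} (hκ : κ.IsInaccessible) {p : Ordinal → Q1S κ.ord S}
    (hγ : γ < κ.ord) (hγ0 : 0 < γ) : IsClubIn κ.ord (limC γ p) := by
  have hcof : κ.ord.cof = κ := hκ.isRegular.cof_ord
  exact IsClubIn.biInter (by rw [hcof]; exact hκ.aleph0_lt)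
    (by rw [hcof]; exact Cardinal.lt_ord.mp hγ) hγ0 fun ξ _ => (p ξ).seq.1

lemma exists_gt_of_upward_closed {η ζ₀ : Ordinal} {P : Ordinal → Prop}
    (hγ : Order.IsSuccLimit γ) (hη : η < γ) (hζ₀ : ζ₀ < γ) (h₀ : P ζ₀)
    (hP : ∀ ζ ζ', ζ ≤ ζ' → ζ' < γ → P ζ → P ζ') : ∃ ζ, η < ζ ∧ ζ < γ ∧ P ζ :=
  ⟨ζ₀ ⊔ Order.succ η, (Order.lt_succ η).trans_le le_sup_right,
    max_lt hζ₀ (hγ.succ_lt hη), hP _ _ le_sup_left (max_lt hζ₀ (hγ.succ_lt hη)) h₀⟩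

namespace IncreasingBelow

lemma C_subset (hp : IncreasingBelow γ p) {η ζ : Ordinal} (hle : η ≤ ζ) (hζ : ζ < γ) :
    (p ζ).C ⊆ (p η).C := by
  rcases hle.lt_or_eq with hlt | rfl
  exacts [(hp η ζ hlt hζ).1, subset_rfl]

lemma sInf_C_le (hp : IncreasingBelow γ p) (hlam : 0 < lam) {η ζ : Ordinal} (hle : η ≤ ζ)
    (hζ : ζ < γ) : sInf (p η).C ≤ sInf (p ζ).C :=
  csInf_le' (hp.C_subset hle hζ ((p ζ).seq.1.1.sInf_mem hlam))

lemma nextC_le (hp : IncreasingBelow γ p) {η ζ x : Ordinal} (hle : η ≤ ζ) (hζ : ζ < γ)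
    (hx : x < lam) : nextC (p η).C x ≤ nextC (p ζ).C x :=
  nextC_le_nextC_of_subset (hp.C_subset hle hζ) ⟨_, (p ζ).seq.1.1.nextC_mem hx⟩

lemma w_eq (hp : IncreasingBelow γ p) (hlam : 0 < lam) {η ζ : Ordinal} (hle : η ≤ ζ)
    (hζ : ζ < γ) : (p ζ).w ∩ Iio (sInf (p η).C) = (p η).w := by
  rcases hle.lt_or_eq with hlt | rfl
  · have h := (hp η ζ hlt hζ).2.1.1.2.1
    rwa [firstAbove_eq_sInf ((p η).seq.1.1.nonempty hlam) (p η).w_sub] at h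
  · exact inter_eq_left.mpr (p _).w_sub

lemma limW_inter_Iio (hp : IncreasingBelow γ p) (hlam : 0 < lam) {ζ : Ordinal} (hζ : ζ < γ) :
    limW γ p ∩ Iio (sInf (p ζ).C) = (p ζ).w := by
  refine subset_antisymm (fun x ⟨hx, hxζ⟩ => ?_)
    fun x hx => ⟨mem_limW.mpr ⟨ζ, hζ, hx⟩, (p ζ).w_sub hx⟩
  obtain ⟨ξ, hξ, hxξ⟩ := mem_limW.mp hx
  rcases le_total ξ ζ with hle | hle
  · rw [← hp.w_eq hlam hle hζ] at hxξ
    exact hxξ.1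
  · rw [← hp.w_eq hlam hle hξ]
    exact ⟨hxξ, hxζ⟩

end IncreasingBelow

lemma sInf_C_le_sInf_limC {ζ : Ordinal} (hζ : ζ < γ) (hne : (limC γ p).Nonempty) :
    sInf (p ζ).C ≤ sInf (limC γ p) :=
  csInf_le_csInf (OrderBot.bddBelow _) hne (limC_subset hζ)

lemma limW_subset_Iio (hne : (limC γ p).Nonempty) : limW γ p ⊆ Iio (sInf (limC γ p)) := by
  intro x hx
  obtain ⟨ζ, hζ, hxζ⟩ := mem_limW.mp hx
  exact ((p ζ).w_sub hxζ).trans_le (sInf_C_le_sInf_limC hζ hne)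

lemma sSup_mem_limC {s : Set Ordinal} (hs : s.Nonempty) (hbdd : BddAbove s) (hlt : sSup s < lam)
    (h : ∀ η < γ, ∀ a ∈ s, ∃ b ∈ s ∩ (p η).C, a ≤ b) : sSup s ∈ limC γ p := by
  refine mem_limC.mpr fun η hη => ?_
  obtain ⟨a, ha⟩ := hs
  have hne : (s ∩ (p η).C).Nonempty := let ⟨b, hb, _⟩ := h η hη a ha; ⟨b, hb⟩
  have heq : sSup (s ∩ (p η).C) = sSup s :=
    le_antisymm (csSup_le_csSup hbdd hne inter_subset_left) <| csSup_le ⟨a, ha⟩ fun a ha =>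
      let ⟨b, hb, hab⟩ := h η hη a ha; hab.trans (le_csSup (hbdd.mono inter_subset_left) hb)
  exact heq ▸ (p η).seq.1.sSup_mem inter_subset_right hne (hbdd.mono inter_subset_left)
    (heq ▸ hlt)

lemma sInf_limC_le (hp : IncreasingBelow γ p) (hγ : Order.IsSuccLimit γ) (hlam : 0 < lam)
    {ξ : Ordinal} (hξ : ξ < lam) (h : ∀ ζ < γ, sInf (p ζ).C ≤ ξ) : sInf (limC γ p) ≤ ξ := by
  set s := (fun ζ => sInf (p ζ).C) '' Iio γ
  have hbdd : BddAbove s := ⟨ξ, by rintro _ ⟨ζ, hζ, rfl⟩; exact h ζ hζ⟩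
  have hsξ : sSup s ≤ ξ := csSup_le' fun _ ⟨ζ, hζ, hζ'⟩ => hζ' ▸ h ζ hζ
  refine (csInf_le' (sSup_mem_limC (s := s) ⟨_, 0, hγ.pos, rfl⟩ hbdd (hsξ.trans_lt hξ) ?_)).trans
    hsξ
  rintro η hη _ ⟨ζ, hζ, rfl⟩
  have hζη : ζ ⊔ η < γ := max_lt hζ hη
  exact ⟨_, ⟨⟨_, hζη, rfl⟩, hp.C_subset le_sup_right hζη ((p _).seq.1.1.sInf_mem hlam)⟩,
    hp.sInf_C_le hlam le_sup_left hζη⟩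

lemma exists_gt_lt_nextC (hp : IncreasingBelow γ p) (hγ : Order.IsSuccLimit γ)
    (hclub : IsClubIn lam (limC γ p)) {η δ x : Ordinal} (hη : η < γ) (hδ : δ ∈ limC γ p)
    (hx : x < nextC (limC γ p) δ) : ∃ ζ, η < ζ ∧ ζ < γ ∧ x < nextC (p ζ).C δ := by
  have hδlam : δ < lam := hclub.1.1 hδ
  set s := (fun ζ => nextC (p ζ).C δ) '' Iio γ
  have hle : ∀ ζ < γ, nextC (p ζ).C δ ≤ nextC (limC γ p) δ := fun ζ hζ =>
    nextC_le_nextC_of_subset (limC_subset hζ) ⟨_, hclub.1.nextC_mem hδlam⟩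
  have hs : s.Nonempty := ⟨_, 0, hγ.pos, rfl⟩
  have hbdd : BddAbove s := ⟨_, by rintro _ ⟨ζ, hζ, rfl⟩; exact hle ζ hζ⟩
  have hsup : sSup s ≤ nextC (limC γ p) δ := csSup_le hs fun _ ⟨ζ, hζ, h⟩ => h ▸ hle ζ hζ
  have hmem : sSup s ∈ limC γ p := by
    refine sSup_mem_limC hs hbdd (hsup.trans_lt (hclub.1.nextC_lt hδlam)) ?_
    rintro η hη _ ⟨ζ, hζ, rfl⟩
    have hζη : ζ ⊔ η < γ := max_lt hζ hη
    exact ⟨_, ⟨⟨_, hζη, rfl⟩, hp.C_subset le_sup_right hζη ((p _).seq.1.1.nextC_mem hδlam).1⟩,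
      hp.nextC_le le_sup_left hζη hδlam⟩
  have hδs : δ < sSup s := ((p 0).seq.1.1.lt_nextC hδlam).trans_le (le_csSup hbdd ⟨0, hγ.pos, rfl⟩)
  obtain ⟨_, ⟨ζ₀, hζ₀, rfl⟩, hxζ₀⟩ := exists_lt_of_lt_csSup hs (hx.trans_le (nextC_le hmem hδs))
  exact exists_gt_of_upward_closed hγ hη hζ₀ hxζ₀ fun ζ ζ' h hζ' hx =>
    hx.trans_le (hp.nextC_le h hζ' hδlam)

lemma limW_union_sClosed (hp : IncreasingBelow γ p) (hγ : Order.IsSuccLimit γ) (hlam : 0 < lam)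
    (hclub : IsClubIn lam (limC γ p)) : SClosed S (limW γ p ∪ {sInf (limC γ p)}) := by
  refine SClosed.union_singleton (limW_subset_Iio (hclub.1.nonempty hlam))
    fun ξ hξ hne hsup hξS => ?_
  by_cases hex : ∃ ζ < γ, ξ < sInf (p ζ).C
  · obtain ⟨ζ, hζ, hξζ⟩ := hex
    refine (p ζ).w_cl.mem_of_inter_Iio_eq ?_ hξζ hξζ hne hsup hξS
    rw [hp.limW_inter_Iio hlam hζ, inter_eq_left.mpr (p ζ).w_sub]
  · push Not at hex
    exact absurd (sInf_limC_le hp hγ hlam (hξ.trans (hclub.1.1 (hclub.1.sInf_mem hlam))) hex)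
      hξ.not_ge

lemma IncreasingBelow.c_inter_Iio_nextC (hp : IncreasingBelow γ p) {η ζ δ : Ordinal}
    {v : Set Ordinal} (hle : η ≤ ζ) (hζ : ζ < γ) (hδ : δ ∈ (p ζ).C)
    (hv : v ∈ posPlusS S (p ζ).C (p ζ).c (p ζ).w δ) :
    (p ζ).c δ v ∩ Iio (nextC (p η).C δ) = (p η).c δ v := by
  have hδlam : δ < lam := (p ζ).seq.1.1.1 hδ
  have hvδ : v ⊆ Iio δ := hv.1.1
  have hext := (p ζ).seq.2.1.2 δ hδ v hvδ
  rcases hle.lt_or_eq with hlt | rfl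
  swap
  · exact inter_eq_left.mpr hext.1
  have hpos := (hp η ζ hlt hζ).2.2 δ hδ ⟨_, (p ζ).seq.1.1.nextC_mem hδlam⟩ v hv
  have hδη : δ ∈ (p η).C := hp.C_subset hlt.le hζ hδ
  have hat := (mem_posPlus_iff.mp hpos.1.1).2.2 δ ⟨_, (p η).seq.1.1.nextC_mem hδlam⟩
    (hp.nextC_le hlt.le hζ hδlam)
  have hdisj := hat.1 hδη hvδ
  rw [hext.2.2] at hdisj
  -- `δ ∈ c δ v \ v`, so `c δ v` is not constant on `[δ, nextC)`
  refine (hdisj.resolve_right fun h => ?_).symm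
  have hδmem : δ ∈ (p ζ).c δ v ∩ Iio (nextC (p η).C δ) :=
    ⟨(p ζ).seq.2.2.1 δ hδ v hvδ, (p η).seq.1.1.lt_nextC hδlam⟩
  rw [← h] at hδmem
  exact lt_irrefl δ (hvδ hδmem)

lemma natLimitC_of_forall {δ : Ordinal} {v : Set Ordinal} (hδ : δ ∈ limC γ p)
    (hvδ : v ⊆ Iio δ) (hall : ∀ ζ < γ, v ∈ posPlusS S (p ζ).C (p ζ).c (p ζ).w δ) :
    natLimitC lam S γ p δ v = ⋃ ζ ∈ Iio γ, (p ζ).c δ v := by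
  rw [natLimitC, if_pos (show δ ∈ ⋂ ξ ∈ Iio γ, (p ξ).C from hδ), if_pos hvδ, if_pos hall]

lemma natLimitC_of_not_forall {δ : Ordinal} {v : Set Ordinal} (hδ : δ ∈ limC γ p)
    (hvδ : v ⊆ Iio δ) (hall : ¬ ∀ ζ < γ, v ∈ posPlusS S (p ζ).C (p ζ).c (p ζ).w δ) :
    natLimitC lam S γ p δ v = v ∪ {δ} := by
  rw [natLimitC, if_pos (show δ ∈ ⋂ ξ ∈ Iio γ, (p ξ).C from hδ), if_pos hvδ, if_neg hall]

lemma natLimitC_eq_empty {δ : Ordinal} {v : Set Ordinal} (h : δ ∉ limC γ p ∨ ¬ v ⊆ Iio δ) :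
    natLimitC lam S γ p δ v = ∅ := by
  by_cases hδ : δ ∈ limC γ p
  · rw [natLimitC, if_pos (show δ ∈ ⋂ ξ ∈ Iio γ, (p ξ).C from hδ),
      if_neg (h.resolve_left (not_not_intro hδ))]
  · exact if_neg hδ

lemma natLimitC_inter_Iio_nextC (hp : IncreasingBelow γ p) {δ : Ordinal} {v : Set Ordinal}
    (hδ : δ ∈ limC γ p) (hvδ : v ⊆ Iio δ)
    (hall : ∀ ζ < γ, v ∈ posPlusS S (p ζ).C (p ζ).c (p ζ).w δ) {η : Ordinal} (hη : η < γ) :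
    natLimitC lam S γ p δ v ∩ Iio (nextC (p η).C δ) = (p η).c δ v := by
  rw [natLimitC_of_forall hδ hvδ hall, iUnion₂_inter]
  refine subset_antisymm (iUnion₂_subset fun ζ hζ => ?_) fun x hx => mem_iUnion₂.mpr
    ⟨η, hη, hx, ((p η).seq.2.1.2 δ (limC_subset hη hδ) v hvδ).1 hx⟩
  rcases le_total ζ η with hle | hle
  · rw [← hp.c_inter_Iio_nextC hle hη (limC_subset hη hδ) (hall η hη)]
    exact fun x hx => hx.1.1
  · rw [← hp.c_inter_Iio_nextC hle hζ (limC_subset hζ hδ) (hall ζ hζ)]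

lemma natLimitC_subset_Iio_nextC (hclub : IsClubIn lam (limC γ p)) {δ : Ordinal}
    {v : Set Ordinal} (hδ : δ ∈ limC γ p) (hvδ : v ⊆ Iio δ)
    (hall : ∀ ζ < γ, v ∈ posPlusS S (p ζ).C (p ζ).c (p ζ).w δ) :
    natLimitC lam S γ p δ v ⊆ Iio (nextC (limC γ p) δ) := by
  have hnext := hclub.1.nextC_mem (hclub.1.1 hδ)
  rw [natLimitC_of_forall hδ hvδ hall]
  refine iUnion₂_subset fun ζ hζ => ?_
  exact ((p ζ).seq.2.1.2 δ (limC_subset hζ hδ) v hvδ).1.trans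
    (Iio_subset_Iio (nextC_le (limC_subset hζ hnext.1) hnext.2))

lemma natLimitC_inter_Iio_self (hp : IncreasingBelow γ p) (hγ : Order.IsSuccLimit γ)
    {δ : Ordinal} {v : Set Ordinal} (hδ : δ ∈ limC γ p) (hvδ : v ⊆ Iio δ)
    (hall : ∀ ζ < γ, v ∈ posPlusS S (p ζ).C (p ζ).c (p ζ).w δ) :
    natLimitC lam S γ p δ v ∩ Iio δ = v := by
  have hδ0 := limC_subset hγ.pos hδ
  rw [← inter_Iio_inter_Iio_of_le ((p 0).seq.1.1.lt_nextC ((p 0).seq.1.1.1 hδ0)).le,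
    natLimitC_inter_Iio_nextC hp hδ hvδ hall hγ.pos, ((p 0).seq.2.1.2 δ hδ0 v hvδ).2.2]

lemma mem_natLimitC_self (hγ : Order.IsSuccLimit γ) {δ : Ordinal} {v : Set Ordinal}
    (hδ : δ ∈ limC γ p) (hvδ : v ⊆ Iio δ) : δ ∈ natLimitC lam S γ p δ v := by
  by_cases hall : ∀ ζ < γ, v ∈ posPlusS S (p ζ).C (p ζ).c (p ζ).w δ
  · rw [natLimitC_of_forall hδ hvδ hall]
    exact mem_iUnion₂.mpr ⟨0, hγ.pos, (p 0).seq.2.2.1 δ (limC_subset hγ.pos hδ) v hvδ⟩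
  · rw [natLimitC_of_not_forall hδ hvδ hall]
    exact Or.inr rfl

lemma natLimitC_extFun (hp : IncreasingBelow γ p) (hγ : Order.IsSuccLimit γ)
    (hclub : IsClubIn lam (limC γ p)) {δ : Ordinal} (hδ : δ ∈ limC γ p) :
    ExtFun δ (nextC (limC γ p) δ) (natLimitC lam S γ p δ) := by
  intro v hvδ
  have hnotsub : ¬ natLimitC lam S γ p δ v ⊆ Iio δ := fun h =>
    lt_irrefl δ (h (mem_natLimitC_self hγ hδ hvδ))
  by_cases hall : ∀ ζ < γ, v ∈ posPlusS S (p ζ).C (p ζ).c (p ζ).w δ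
  · exact ⟨natLimitC_subset_Iio_nextC hclub hδ hvδ hall, hnotsub,
      natLimitC_inter_Iio_self hp hγ hδ hvδ hall⟩
  refine ⟨?_, hnotsub, ?_⟩ <;> rw [natLimitC_of_not_forall hδ hvδ hall]
  · have hlt := hclub.1.lt_nextC (hclub.1.1 hδ)
    exact union_subset (hvδ.trans (Iio_subset_Iio hlt.le)) (singleton_subset_iff.mpr hlt)
  · rw [union_singleton_inter_Iio le_rfl, inter_eq_left.mpr hvδ]

lemma mem_natLimitC_of_eq_sSup (hp : IncreasingBelow γ p) (hγ : Order.IsSuccLimit γ)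
    (hclub : IsClubIn lam (limC γ p)) {ξ : Ordinal} (hξS : ξ ∈ S) (hξ : ξ ∉ limC γ p)
    {δ : Ordinal} (hδ : δ ∈ limC γ p ∩ Iio ξ) {v : Set Ordinal} (hvδ : v ⊆ Iio δ)
    (hsup : ξ = sSup (natLimitC lam S γ p δ v ∩ Iio ξ)) : ξ ∈ natLimitC lam S γ p δ v := by
  by_cases hall : ∀ ζ < γ, v ∈ posPlusS S (p ζ).C (p ζ).c (p ζ).w δ
  swap
  · rw [natLimitC_of_not_forall hδ.1 hvδ hall] at hsup
    refine absurd (hsup.trans_le (sSup_inter_Iio_le (a := δ) ?_ ξ)) (not_le.mpr hδ.2)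
    exact union_subset (hvδ.trans Iio_subset_Iic_self) (singleton_subset_iff.mpr self_mem_Iic)
  have hξν : ξ < nextC (limC γ p) δ := by
    refine (hsup.trans_le (sSup_inter_Iio_le ?_ ξ)).lt_of_ne fun h => hξ (h ▸ ?_)
    · exact (natLimitC_subset_Iio_nextC hclub hδ.1 hvδ hall).trans Iio_subset_Iic_self
    · exact (hclub.1.nextC_mem (hclub.1.1 hδ.1)).1
  obtain ⟨ζ₂, hζ₂, hξζ₂⟩ : ∃ ζ < γ, ξ ∉ (p ζ).C := by simpa [mem_limC] using hξ
  obtain ⟨ζ, hζ₂ζ, hζ, hξζ⟩ := exists_gt_lt_nextC hp hγ hclub hζ₂ hδ.1 hξν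
  have hrep := natLimitC_inter_Iio_nextC hp hδ.1 hvδ hall hζ
  rw [← inter_Iio_inter_Iio_of_le hξζ.le, hrep] at hsup
  have hmem := (p ζ).seq.2.2.2 ξ hξS (fun h => hξζ₂ (hp.C_subset hζ₂ζ.le hζ h)) δ
    ⟨limC_subset hζ hδ.1, hδ.2⟩ v hvδ hsup
  have hξ' : ξ ∈ natLimitC lam S γ p δ v ∩ Iio (nextC (p ζ).C δ) := by rw [hrep]; exact hmem
  exact hξ'.1

lemma posPlusAt_of_lt_sInf_limC (hp : IncreasingBelow γ p) (hγ : Order.IsSuccLimit γ)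
    (hlam : 0 < lam) (hclub : IsClubIn lam (limC γ p)) {u : Set Ordinal}
    (hu : u ∩ Iio (sInf (limC γ p)) = limW γ p) {η : Ordinal} (hη : η < γ) {x : Ordinal}
    (hx : x < sInf (limC γ p)) : PosPlusAt (p η).C (p η).c (p η).w u x := by
  have hne := hclub.1.nonempty hlam
  have hmin := hclub.1.sInf_mem hlam
  have hxnext := (p η).seq.1.1.lt_nextC (hx.trans (hclub.1.1 hmin))
  by_cases hex : ∃ ζ < γ, x < sInf (p ζ).C
  · obtain ⟨ζ₀, hζ₀, hxζ₀⟩ := hex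
    obtain ⟨ζ, hηζ, hζ, hxζ⟩ := exists_gt_of_upward_closed (P := fun ζ => x < sInf (p ζ).C)
      hγ hη hζ₀ hxζ₀ fun ζ ζ' h hζ' hx => hx.trans_le (hp.sInf_C_le hlam h hζ')
    have hmζ := hp.C_subset hηζ.le hζ ((p ζ).seq.1.1.sInf_mem hlam)
    have hb : nextC (p η).C x ≤ sInf (p ζ).C := nextC_le hmζ hxζ
    have hat := (mem_posPlus_iff.mp (hp η ζ hηζ hζ).2.1.1).2.2 x ⟨_, hmζ, hxζ⟩ hb
    refine hat.of_inter_Iio_eq hxnext.le hb ?_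
    rw [← inter_Iio_inter_Iio_of_le (sInf_C_le_sInf_limC hζ hne), hu,
      hp.limW_inter_Iio hlam hζ, inter_eq_left.mpr (p ζ).w_sub]
  · push Not at hex
    have hWx : limW γ p ⊆ Iio x := fun y hy =>
      let ⟨ζ, hζ, hyζ⟩ := mem_limW.mp hy; ((p ζ).w_sub hyζ).trans_le (hex ζ hζ)
    have hb : nextC (p η).C x ≤ sInf (limC γ p) := nextC_le (limC_subset hη hmin) hx
    refine posPlusAt_of_inter_Iio_eq ?_
    rw [← inter_Iio_inter_Iio_of_le hb, ← inter_Iio_inter_Iio_of_le hx.le, hu,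
      inter_eq_left.mpr hWx, inter_eq_left.mpr (hWx.trans (Iio_subset_Iio hxnext.le))]

lemma posPlusAt_of_sInf_limC_le (hp : IncreasingBelow γ p) (hγ : Order.IsSuccLimit γ)
    (hlam : 0 < lam) (hclub : IsClubIn lam (limC γ p)) {α₀ : Ordinal} (hα₀ : α₀ ∈ limC γ p)
    {u : Set Ordinal} (hu : u ∈ posPlusS S (limC γ p) (natLimitC lam S γ p) (limW γ p) α₀)
    (IH : ∀ δ ∈ limC γ p, δ < α₀ →
      ∀ v ∈ posPlusS S (limC γ p) (natLimitC lam S γ p) (limW γ p) δ,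
        ∀ ζ < γ, v ∈ posPlusS S (p ζ).C (p ζ).c (p ζ).w δ)
    {η : Ordinal} (hη : η < γ) {x : Ordinal} (hxlam : x < lam) (hx : sInf (limC γ p) ≤ x)
    (hxα : nextC (p η).C x ≤ α₀) : PosPlusAt (p η).C (p η).c (p η).w u x := by
  have hne := hclub.1.nonempty hlam
  have hxnext := (p η).seq.1.1.lt_nextC hxlam
  obtain ⟨δ, hδ, hδx, hxδ⟩ := hclub.exists_le_lt_nextC hlam hxlam hx
  have hδα₀ : δ < α₀ := hδx.trans_lt (hxnext.trans_le hxα)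
  have hνδ := hclub.1.nextC_mem (hclub.1.1 hδ)
  have hWδ : limW γ p ⊆ Iio δ := (limW_subset_Iio hne).trans (Iio_subset_Iio (csInf_le' hδ))
  have hat := (mem_posPlus_iff.mp hu.1).2.2 δ ⟨α₀, hα₀, hδα₀⟩ (nextC_le hα₀ hδα₀)
  rcases hat.1 hδ hWδ with hc | hconst
  · -- on `[δ, nextC δ)`, `u` follows the extension of `u ∩ δ` chosen by some `p ζ`, `η < ζ`
    set v := u ∩ Iio δ
    have hfirst : firstAbove (limC γ p) (limW γ p) ≤ δ := by
      rw [firstAbove_eq_sInf hne (limW_subset_Iio hne)]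
      exact csInf_le' hδ
    have hv := IH δ hδ hδα₀ v (inter_Iio_mem_posPlusS hu hδα₀.le hfirst)
    obtain ⟨ζ, hηζ, hζ, hxζ⟩ := exists_gt_lt_nextC hp hγ hclub hη hδ hxδ
    have hnextζ := (p ζ).seq.1.1.nextC_mem (hclub.1.1 hδ)
    have hnextη := hp.C_subset hηζ.le hζ hnextζ.1
    have hb : nextC (p η).C x ≤ nextC (p ζ).C δ := nextC_le hnextη hxζ
    have hcv := (hp η ζ hηζ hζ).2.2 δ (limC_subset hζ hδ) ⟨_, hnextζ⟩ v (hv ζ hζ)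
    have hatv := (mem_posPlus_iff.mp hcv.1.1).2.2 x ⟨_, hnextη, hxζ⟩ hb
    refine (hatv.of_inter_Iio_eq hxnext.le hb ?_).mono_w
      (fun _ => inter_subset_right.trans (Iio_subset_Iio hδx)) fun _ hxC => ?_
    · have hle : nextC (p ζ).C δ ≤ nextC (limC γ p) δ := nextC_le (limC_subset hζ hνδ.1) hνδ.2
      rw [← inter_Iio_inter_Iio_of_le hle, ← hc,
        natLimitC_inter_Iio_nextC hp hδ inter_subset_right hv hζ,
        inter_eq_left.mpr hcv.1.1.1]
    · exact (csSup_le' fun y hy => (mem_Iio.mp hy.2).le).trans_lt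
        (hδx.lt_of_ne fun h => hxC (h ▸ limC_subset hη hδ))
  · refine posPlusAt_of_inter_Iio_eq ?_
    have hb : nextC (p η).C x ≤ nextC (limC γ p) δ := nextC_le (limC_subset hη hνδ.1) hxδ
    rw [inter_Iio_eq_of_le_of_le hconst (hδx.trans hxnext.le) hb,
      inter_Iio_eq_of_le_of_le hconst hδx (hxnext.le.trans hb)]

theorem mem_posPlusS_of_mem_posPlusS_limC (hp : IncreasingBelow γ p)
    (hγ : Order.IsSuccLimit γ) (hlam : 0 < lam) (hclub : IsClubIn lam (limC γ p))
    {α₀ : Ordinal} (hα₀ : α₀ ∈ limC γ p) {u : Set Ordinal}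
    (hu : u ∈ posPlusS S (limC γ p) (natLimitC lam S γ p) (limW γ p) α₀) {η : Ordinal}
    (hη : η < γ) : u ∈ posPlusS S (p η).C (p η).c (p η).w α₀ := by
  induction α₀ using WellFoundedLT.induction generalizing u η with
  | _ α₀ IH =>
  have hne := hclub.1.nonempty hlam
  obtain ⟨huα, hfirst, -⟩ := mem_posPlus_iff.mp hu.1
  rw [firstAbove_eq_sInf hne (limW_subset_Iio hne)] at hfirst
  refine ⟨mem_posPlus_iff.mpr ⟨huα, ?_, fun x hxne hxα => ?_⟩, hu.2⟩
  · rw [firstAbove_eq_sInf ((p η).seq.1.1.nonempty hlam) (p η).w_sub,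
      ← inter_Iio_inter_Iio_of_le (sInf_C_le_sInf_limC hη hne), hfirst, hp.limW_inter_Iio hlam hη]
  rcases lt_or_ge x (sInf (limC γ p)) with hx | hx
  · exact posPlusAt_of_lt_sInf_limC hp hγ hlam hclub hfirst hη hx
  · have hxlam : x < lam := ((nextC_mem_of_nonempty hxne).2.trans_le hxα).trans (hclub.1.1 hα₀)
    exact posPlusAt_of_sInf_limC_le hp hγ hlam hclub hα₀ hu
      (fun δ hδ hδα v hv ζ hζ => IH δ hδα hδ hv hζ) hη hxlam hx hxα

theorem natLimitC_mem_posS (hp : IncreasingBelow γ p) (hγ : Order.IsSuccLimit γ)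
    (hlam : 0 < lam) (hclub : IsClubIn lam (limC γ p)) {α₀ : Ordinal} (hα₀ : α₀ ∈ limC γ p)
    {u : Set Ordinal} (hu : u ∈ posPlusS S (limC γ p) (natLimitC lam S γ p) (limW γ p) α₀)
    {η : Ordinal} (hη : η < γ) :
    natLimitC lam S γ p α₀ u ∈ posS S (p η).C (p η).c u (nextC (limC γ p) α₀) := by
  set X := natLimitC lam S γ p α₀ u
  have hall := fun ζ (hζ : ζ < γ) => mem_posPlusS_of_mem_posPlusS_limC hp hγ hlam hclub hα₀ hu hζ
  have huα : u ⊆ Iio α₀ := hu.1.1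
  have hα₀lam := hclub.1.1 hα₀
  have hkey : ∀ y < nextC (limC γ p) α₀, ∃ ζ, η < ζ ∧ ζ < γ ∧ y < nextC (p ζ).C α₀ :=
    fun y hy => exists_gt_lt_nextC hp hγ hclub hη hα₀ hy
  have hrep : ∀ ζ < γ, X ∩ Iio (nextC (p ζ).C α₀) = (p ζ).c α₀ u ∩ Iio (nextC (p ζ).C α₀) :=
    fun ζ hζ => by
      rw [natLimitC_inter_Iio_nextC hp hα₀ huα hall hζ,
        inter_eq_left.mpr ((p ζ).seq.2.1.2 α₀ (limC_subset hζ hα₀) u huα).1]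
  have hstep : ∀ ζ, η < ζ → ζ < γ →
      (p ζ).c α₀ u ∈ posS S (p η).C (p η).c u (nextC (p ζ).C α₀) := fun ζ hηζ hζ =>
    (hp η ζ hηζ hζ).2.2 α₀ (limC_subset hζ hα₀) ⟨_, (p ζ).seq.1.1.nextC_mem hα₀lam⟩ u (hall ζ hζ)
  have hnext : ∀ ζ, η < ζ → ζ < γ → ∀ y < nextC (p ζ).C α₀,
      nextC (p η).C y ≤ nextC (p ζ).C α₀ := fun ζ hηζ hζ y hy =>
    nextC_le (hp.C_subset hηζ.le hζ ((p ζ).seq.1.1.nextC_mem hα₀lam).1) hy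
  have hXν : X ⊆ Iio (nextC (limC γ p) α₀) := natLimitC_subset_Iio_nextC hclub hα₀ huα hall
  have hfirst : firstAbove (p η).C u ≤ α₀ := csInf_le' ⟨limC_subset hη hα₀, huα⟩
  obtain ⟨ζ₀, hηζ₀, hζ₀, hαζ₀⟩ := hkey α₀ (hclub.1.lt_nextC hα₀lam)
  have hfζ₀ : firstAbove (p η).C u < nextC (p ζ₀).C α₀ := hfirst.trans_lt hαζ₀
  refine ⟨⟨mem_posPlus_iff.mpr ⟨hXν, ?_, fun x hxne hxν => ?_⟩, fun _ _ => ?_⟩, ?_⟩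
  · rw [inter_Iio_eq_of_le (hrep ζ₀ hζ₀) hfζ₀.le]
    exact (hstep ζ₀ hηζ₀ hζ₀).1.1.2.1
  · have hx := (nextC_mem_of_nonempty hxne).2
    obtain ⟨ζ, hηζ, hζ, hxζ⟩ := hkey x (hx.trans_le hxν)
    have hat := (mem_posPlus_iff.mp (hstep ζ hηζ hζ).1.1).2.2 x hxne (hnext ζ hηζ hζ x hxζ)
    exact hat.of_inter_Iio_eq hx.le (hnext ζ hηζ hζ x hxζ) (hrep ζ hζ)
  · rw [inter_Iio_eq_of_le (hrep ζ₀ hζ₀) (hnext ζ₀ hηζ₀ hζ₀ _ hfζ₀)]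
    exact (hstep ζ₀ hηζ₀ hζ₀).1.2 hfζ₀.le (hnext ζ₀ hηζ₀ hζ₀ _ hfζ₀)
  · refine SClosed.union_singleton hXν fun ξ hξ hne hsup hξS => ?_
    obtain ⟨ζ, hηζ, hζ, hξζ⟩ := hkey ξ hξ
    exact (hstep ζ hηζ hζ).2.mem_of_inter_Iio_eq (hrep ζ hζ) hξζ hξζ hne hsup hξS

noncomputable def natLimit (hp : IncreasingBelow γ p) (hγ : Order.IsSuccLimit γ) (hlam : 0 < lam)
    (hclub : IsClubIn lam (limC γ p)) : Q1S lam S where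
  w := limW γ p
  C := limC γ p
  c := natLimitC lam S γ p
  seq := ⟨hclub, ⟨hclub.1, fun _ hδ => natLimitC_extFun hp hγ hclub hδ⟩,
    fun _ hδ _ hv => mem_natLimitC_self hγ hδ hv,
    fun _ hξS hξ _ hδ _ hv hsup => mem_natLimitC_of_eq_sSup hp hγ hclub hξS hξ hδ hv hsup⟩
  w_sub := limW_subset_Iio (hclub.1.nonempty hlam)
  w_cl := limW_union_sClosed hp hγ hlam hclub
  norm _ _ h := natLimitC_eq_empty h

theorem le_natLimit (hp : IncreasingBelow γ p) (hγ : Order.IsSuccLimit γ) (hlam : 0 < lam)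
    (hclub : IsClubIn lam (limC γ p)) {η : Ordinal} (hη : η < γ) :
    Q1Sle lam S (p η) (natLimit hp hγ hlam hclub) :=
  ⟨limC_subset hη, mem_posPlusS_of_mem_posPlusS_limC hp hγ hlam hclub (hclub.1.sInf_mem hlam)
      (mem_posPlusS_sInf (hclub.1.nonempty hlam) (limW_subset_Iio (hclub.1.nonempty hlam))
        (limW_union_sClosed hp hγ hlam hclub)) hη,
    fun _ hα₀ _ _ hu => natLimitC_mem_posS hp hγ hlam hclub hα₀ hu hη⟩

end Q1S

theorem Q1S_lt_lambda_complete_general (κ : Cardinal.{0}) (hκ : κ.IsInaccessible)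
    (S : Set Ordinal)
    (γ : Ordinal) (hγlim : Order.IsSuccLimit γ) (hγ : γ < κ.ord)
    (p : Ordinal → Q1S κ.ord S)
    (hmono : ∀ ξ ζ, ξ < ζ → ζ < γ → Q1Sle κ.ord S (p ξ) (p ζ)) :
    ∃ q : Q1S κ.ord S, ∀ ξ < γ, Q1Sle κ.ord S (p ξ) q :=
  have hclub := Q1S.isClubIn_limC hκ hγ hγlim.pos
  have hlam : 0 < κ.ord := hγlim.pos.trans hγ
  ⟨Q1S.natLimit hmono hγlim hlam hclub, fun _ hη => Q1S.le_natLimit hmono hγlim hlam hclub hη⟩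

/-- `Q¹_S` is `(<λ)`-complete. -/
theorem Q1S_lt_lambda_complete (κ : Cardinal.{0}) (hκ : κ.IsInaccessible)
    (S : Set Ordinal)
    (hS : StatIn κ.ord S) (hS' : StatIn κ.ord (Set.Iio κ.ord \ S))
    (γ : Ordinal) (hγlim : Order.IsSuccLimit γ) (hγ : γ < κ.ord)
    (p : Ordinal → Q1S κ.ord S)
    (hmono : ∀ ξ ζ, ξ < ζ → ζ < γ → Q1Sle κ.ord S (p ξ) (p ζ)) :
    ∃ q : Q1S κ.ord S, ∀ ξ < γ, Q1Sle κ.ord S (p ξ) q :=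
  Q1S_lt_lambda_complete_general κ hκ S γ hγlim hγ p hmono
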